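/- Let V be a partial order viewed as a category, ♭ : V → V monotone with ♭(v) ≤ v and ♭(♭(v)) = ♭(v), J the quantization Grothendieck topology on V, and b : V ⥤ V the functor induced by ♭. For each presheaf Q : V^op ⥤ Type let ♭*Q = b.op ⋙ Q, and let ζ_Q : Q ⟶ ♭*Q be the natural transformation whose component at v is the restriction map Q(♭(v) ⟶ v) : Q(v) → Q(♭(v)). Then for every presheaf Q, every J-sheaf R, and every natural transformation α : Q ⟶ R, there exists a unique natural transformation β : ♭*Q ⟶ R such that β ∘ ζ_Q = α. (Thus ♭*, with unit ζ, is the associated sheaf functor: it is left adjoint to the inclusion of J-sheaves into presheaves.) -/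

import Mathlib

/-! The restriction maps `ζ_Q` form a natural transformation `𝟭 ⟶ ♭*`, and thinness of `V`
gives `ζ_{♭*Q} = ♭*ζ_Q`. For a sheaf `R`, the covering sieve generated by the monomorphism
`♭(v) ⟶ v` makes each `ζ_R` bijective, so `ζ_R` is invertible and `β := ♭*α ≫ ζ_R⁻¹` is a
factorization. Any factorization satisfies `β ≫ ζ_R = ζ_{♭*Q} ≫ ♭*β = ♭*(ζ_Q ≫ β) = ♭*α`,
which pins it down. -/

open CategoryTheory

def quantTopology {V : Type*} [PartialOrder V] {b : V → V} (hb : Monotone b)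
    (hle : ∀ v, b v ≤ v) (hidem : ∀ v, b (b v) = b v) :
    GrothendieckTopology V where
  sieves v := { S | S.arrows (homOfLE (hle v)) }
  top_mem' v := trivial
  pullback_stable' := by
    intro v v' S f hS
    exact S.downward_closed hS (homOfLE (hb (leOfHom f)))
  transitive' := by
    intro v S hS R hR
    have key : ∀ {x y : V} (_ : x = y) (hx : x ≤ v) (hy : y ≤ v),
        R.arrows (homOfLE hx) → R.arrows (homOfLE hy) := by
      rintro x y rfl hx hy h
      exact h
    exact key (hidem v) ((hle (b v)).trans (hle v)) (hle v) (hR hS)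

/-- The unit `ζ_Q : Q ⟶ ♭*Q`, where `♭*Q` is `hb.functor.op ⋙ Q`. -/
def zeta {V : Type*} [PartialOrder V] {b : V → V} (hb : Monotone b)
    (hle : ∀ v, b v ≤ v) (Q : Vᵒᵖ ⥤ Type*) : Q ⟶ hb.functor.op ⋙ Q where
  app U := Q.map (homOfLE (hle U.unop)).op
  naturality := by
    intro U U' i
    dsimp
    rw [← Q.map_comp, ← Q.map_comp]
    rfl

theorem CategoryTheory.Presieve.isSheafFor_singleton_iff_bijective_of_mono {C : Type*}
    [Category C] {P : Cᵒᵖ ⥤ Type*} {X Y : C} (f : X ⟶ Y) [Mono f] :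
    IsSheafFor P (singleton f) ↔ Function.Bijective (P.map f.op) := by
  have compatible (x : P.obj (.op X)) {Z : C} (p₁ p₂ : Z ⟶ X) (h : p₁ ≫ f = p₂ ≫ f) :
      P.map p₁.op x = P.map p₂.op x := by
    rw [cancel_mono f |>.mp h]
  rw [isSheafFor_singleton, Function.bijective_iff_existsUnique]
  exact forall_congr' fun x => ⟨fun h => h (compatible x), fun h _ => h⟩

section Quantization

universe w

variable {V : Type*} [PartialOrder V] {b : V → V} (hb : Monotone b) (hle : ∀ v, b v ≤ v)

theorem bijective_map_of_isSheaf_quantTopology (hidem : ∀ v, b (b v) = b v)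
    {R : Vᵒᵖ ⥤ Type*} (hR : Presieve.IsSheaf (quantTopology hb hle hidem) R) (v : V) :
    Function.Bijective (R.map (homOfLE (hle v)).op) := by
  have : Mono (homOfLE (hle v)) := ⟨fun _ _ _ => Subsingleton.elim _ _⟩
  rw [← Presieve.isSheafFor_singleton_iff_bijective_of_mono, Presieve.isSheafFor_iff_generate]
  exact hR _ ⟨_, 𝟙 _, _, Presieve.singleton_self _, Category.id_comp _⟩

theorem isIso_zeta_of_isSheaf (hidem : ∀ v, b (b v) = b v)
    {R : Vᵒᵖ ⥤ Type*} (hR : Presieve.IsSheaf (quantTopology hb hle hidem) R) :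
    IsIso (zeta hb hle R) := by
  have (U : Vᵒᵖ) : IsIso ((zeta hb hle R).app U) :=
    (isIso_iff_bijective _).mpr (bijective_map_of_isSheaf_quantTopology hb hle hidem hR U.unop)
  exact NatIso.isIso_of_isIso_app _

theorem zeta_comp_whiskerLeft {Q R : Vᵒᵖ ⥤ Type w} (α : Q ⟶ R) :
    zeta hb hle Q ≫ Functor.whiskerLeft hb.functor.op α = α ≫ zeta hb hle R := by
  ext U : 2
  exact α.naturality _

theorem zeta_functor_op_comp (Q : Vᵒᵖ ⥤ Type*) :
    zeta hb hle (hb.functor.op ⋙ Q) = Functor.whiskerLeft hb.functor.op (zeta hb hle Q) := by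
  ext U : 2
  exact congrArg Q.map (Subsingleton.elim _ _)

end Quantization

theorem flatStar_is_sheafification.{w, u}
    {V : Type u} [PartialOrder V] {b : V → V} (hb : Monotone b)
    (hle : ∀ v, b v ≤ v) (hidem : ∀ v, b (b v) = b v)
    (Q R : Vᵒᵖ ⥤ Type w)
    (hR : Presieve.IsSheaf (quantTopology hb hle hidem) R)
    (α : Q ⟶ R) :
    ∃! β : (hb.functor.op ⋙ Q) ⟶ R, zeta hb hle Q ≫ β = α := by
  have := isIso_zeta_of_isSheaf hb hle hidem hR
  refine ⟨Functor.whiskerLeft hb.functor.op α ≫ inv (zeta hb hle R), ?_, fun β hβ => ?_⟩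
  · dsimp only
    rw [← Category.assoc, zeta_comp_whiskerLeft, Category.assoc, IsIso.hom_inv_id,
      Category.comp_id]
  · rw [IsIso.eq_comp_inv, ← hβ, Functor.whiskerLeft_comp, ← zeta_functor_op_comp,
      zeta_comp_whiskerLeft]
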